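/- arXiv:2206.05858 — 2 statements merged into one kernel-verified Lean document; each statement's English description precedes it below -/
import Mathlib

section
/- The family of Legendre rational functions {R_n : n ≥ 1} is total in L²(0,1): the linear span of the functions R_n restricted to [0,1] is dense in L²(0,1). -/
open Polynomial MeasureTheory Real Filter

/-- The Legendre polynomial of degree `n`, via the Rodrigues formula
`P_n(x) = 1/(2^n n!) dⁿ/dxⁿ (x² - 1)ⁿ`. -/
noncomputable def legendre (n : ℕ) : Polynomial ℝ :=
  (1 / (2 ^ n * n.factorial) : ℝ) • derivative^[n] ((X ^ 2 - 1) ^ n)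

/-- The shifted Legendre polynomial `P̃_n(x) = P_n(2x - 1)` on `[0,1]`. -/
noncomputable def shiftedLegendre (n : ℕ) (x : ℝ) : ℝ :=
  (legendre n).eval (2 * x - 1)

/-- The altered Legendre polynomial `A_n(x) = ((x+1)/2) P̃_{n-1}(x)` for `n ≥ 1`. -/
noncomputable def alteredLegendre (n : ℕ) (x : ℝ) : ℝ :=
  ((x + 1) / 2) * shiftedLegendre (n - 1) x

/-- The proper Legendre rational function `R_n(x) = (-1)^{n-1} A_n((1-x)/(1+x))`. -/
noncomputable def legendreRational (n : ℕ) (x : ℝ) : ℝ :=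
  (-1) ^ (n - 1) * alteredLegendre n ((1 - x) / (1 + x))

/-! On `(0, 1)`, writing `v = (1 - 3x) / (1 + x)`, one has `R_{n+1}(x) = (-1)^n P_n(v) / (1 + x)`.
Since `P_n` has degree exactly `n`, the span of the `R_n` contains every function
`x ↦ p(v) / (1 + x)` with `p` a polynomial. The map `x ↦ v` is a homeomorphism of `[0, 1]` onto
`[-1, 1]`, so by Weierstrass such functions approximate any continuous `g` uniformly on `[0, 1]`
(approximate `(1 + x) g(x)` as a function of `v`); and bounded continuous functions are dense in
`L²(0, 1)`. -/

open Set
open scoped ENNReal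

section
variable {X E : Type*} [MeasurableSpace X] [NormedAddCommGroup E] {μ : Measure X}

theorem ContinuousOn.memLp_restrict_of_isCompact [TopologicalSpace X] [OpensMeasurableSpace X]
    [SecondCountableTopologyEither X E] {f : X → E} {s K : Set X} [IsFiniteMeasure (μ.restrict s)]
    (hK : IsCompact K) (hsK : s ⊆ K) (hs : MeasurableSet s) (hf : ContinuousOn f K) (p : ℝ≥0∞) :
    MemLp f p (μ.restrict s) := by
  obtain ⟨C, hC⟩ := hK.exists_bound_of_continuousOn hf
  refine MemLp.of_bound ((hf.mono hsK).aestronglyMeasurable hs) C ?_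
  filter_upwards [ae_restrict_mem hs] with x hx using hC x (hsK hx)

theorem MeasureTheory.Lp.dist_le_of_ae_bound [IsProbabilityMeasure μ] {p : ℝ≥0∞} [Fact (1 ≤ p)]
    {u v : Lp E p μ} {C : ℝ} (hC : 0 ≤ C) (h : ∀ᵐ x ∂μ, ‖u x - v x‖ ≤ C) : dist u v ≤ C := by
  have hsub : ∀ᵐ x ∂μ, ‖(u - v : Lp E p μ) x‖ ≤ C := by
    filter_upwards [Lp.coeFn_sub u v, h] with x hx _
    rwa [hx, Pi.sub_apply]
  have hμ : measureUnivNNReal μ = 1 := by simp [measureUnivNNReal]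
  have hnorm := Lp.norm_le_of_ae_bound hC hsub
  rwa [hμ, NNReal.coe_one, Real.one_rpow, one_mul, ← _root_.dist_eq_norm] at hnorm

end

namespace LegendreRational

local notation "μ₀" => volume.restrict (Ioo (0 : ℝ) 1)

section
variable {R : Type*} [CommRing R] [Nontrivial R]

lemma natDegree_X_sq_sub_one_pow (n : ℕ) : ((X ^ 2 - 1 : R[X]) ^ n).natDegree = n + n := by
  rw [← C_1, (monic_X_pow_sub_C (1 : R) two_ne_zero).natDegree_pow, natDegree_X_pow_sub_C]; ring

lemma coeff_X_sq_sub_one_pow_add_self (n : ℕ) : ((X ^ 2 - 1 : R[X]) ^ n).coeff (n + n) = 1 := by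
  rw [← natDegree_X_sq_sub_one_pow (R := R), ← C_1]
  exact ((monic_X_pow_sub_C (1 : R) two_ne_zero).pow n).coeff_natDegree

end

lemma degree_legendre (n : ℕ) : (legendre n).degree = n := by
  refine degree_eq_of_le_of_coeff_ne_zero ?_ ?_
  · refine (degree_smul_le _ _).trans (degree_le_of_natDegree_le ?_)
    exact (natDegree_iterate_derivative _ n).trans (by rw [natDegree_X_sq_sub_one_pow]; omega)
  · rw [legendre, coeff_smul, coeff_iterate_derivative, coeff_X_sq_sub_one_pow_add_self,
      smul_eq_mul, nsmul_one]
    have : (n + n).descFactorial n ≠ 0 := (Nat.descFactorial_pos.mpr (by omega)).ne'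
    exact mul_ne_zero (by positivity) (by exact_mod_cast this)

lemma span_range_legendre : Submodule.span ℝ (range legendre) = ⊤ :=
  let S : Sequence ℝ := ⟨legendre, degree_legendre⟩
  S.span fun n => (leadingCoeff_ne_zero.mpr (S.ne_zero n)).isUnit

noncomputable def rationalEval : ℝ[X] →ₗ[ℝ] ℝ → ℝ :=
  LinearMap.pi fun x => (1 + x)⁻¹ • leval ((1 - 3 * x) / (1 + x))

@[simp]
lemma rationalEval_apply (p : ℝ[X]) (x : ℝ) :
    rationalEval p x = p.eval ((1 - 3 * x) / (1 + x)) / (1 + x) := by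
  simp [rationalEval, div_eq_inv_mul]

lemma legendreRational_succ_eq {x : ℝ} (hx : 1 + x ≠ 0) (n : ℕ) :
    legendreRational (n + 1) x = (-1) ^ n * rationalEval (legendre n) x := by
  have hA : ((1 - x) / (1 + x) + 1) / 2 = 1 / (1 + x) := by field_simp; ring
  have hP : 2 * ((1 - x) / (1 + x)) - 1 = (1 - 3 * x) / (1 + x) := by field_simp; ring
  simp only [legendreRational, alteredLegendre, _root_.shiftedLegendre, rationalEval_apply,
    Nat.add_sub_cancel, hA, hP]
  ring

lemma continuousOn_rationalEval (p : ℝ[X]) : ContinuousOn (rationalEval p) (Ioi (-1)) := by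
  have hpos : ∀ x ∈ Ioi (-1 : ℝ), 1 + x ≠ 0 := fun x hx => by rw [mem_Ioi] at hx; linarith
  show ContinuousOn (fun x => rationalEval p x) _
  simp only [rationalEval_apply]
  fun_prop (disch := assumption)

lemma exists_rationalEval_near (g : ℝ → ℝ) (hg : ContinuousOn g (Icc 0 1)) {ε : ℝ} (hε : 0 < ε) :
    ∃ p : ℝ[X], ∀ x ∈ Icc (0 : ℝ) 1, |rationalEval p x - g x| < ε := by
  -- `v = (1 - 3x)/(1 + x)` maps `[0, 1]` onto `[-1, 1]`, with inverse `x = (1 - v)/(3 + v)`.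
  have hmaps : MapsTo (fun v : ℝ => (1 - v) / (3 + v)) (Icc (-1) 1) (Icc 0 1) := by
    rintro v ⟨hv₁, hv₂⟩
    constructor
    · exact div_nonneg (by linarith) (by linarith)
    · rw [div_le_one (by linarith)]; linarith
  have hcont : ContinuousOn (fun v : ℝ => 4 / (3 + v) * g ((1 - v) / (3 + v))) (Icc (-1) 1) := by
    have hne : ∀ v ∈ Icc (-1 : ℝ) 1, 3 + v ≠ 0 := fun v hv => by linarith [hv.1]
    refine (continuousOn_const.div (by fun_prop) hne).mul (hg.comp ?_ hmaps)
    exact (continuousOn_const.sub continuousOn_id).div (by fun_prop) hne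
  obtain ⟨p, hp⟩ := exists_polynomial_near_of_continuousOn _ _ _ hcont ε hε
  refine ⟨p, fun x ⟨hx₀, hx₁⟩ => ?_⟩
  have hx : 0 < 1 + x := by linarith
  have hv : (1 - 3 * x) / (1 + x) ∈ Icc (-1 : ℝ) 1 := by
    constructor
    · rw [le_div_iff₀ hx]; linarith
    · rw [div_le_one hx]; linarith
  have hweight : 4 / (3 + (1 - 3 * x) / (1 + x)) = 1 + x := by field_simp; ring
  have hinv : (1 - (1 - 3 * x) / (1 + x)) / (3 + (1 - 3 * x) / (1 + x)) = x := by
    field_simp; ring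
  have hnear := hp _ hv
  rw [hweight, hinv] at hnear
  calc |rationalEval p x - g x|
      = |p.eval ((1 - 3 * x) / (1 + x)) - (1 + x) * g x| / (1 + x) := by
        rw [rationalEval_apply, ← abs_of_pos hx, ← abs_div, abs_of_pos hx]
        congr 1; field_simp
    _ ≤ |p.eval ((1 - 3 * x) / (1 + x)) - (1 + x) * g x| :=
        div_le_self (abs_nonneg _) (by linarith)
    _ < ε := hnear

instance : IsProbabilityMeasure μ₀ := ⟨by simp⟩

lemma memLp_rationalEval (p : ℝ[X]) : MemLp (rationalEval p) 2 μ₀ :=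
  ((continuousOn_rationalEval p).mono fun x hx => by simp only [mem_Ioi]; linarith [hx.1])
    |>.memLp_restrict_of_isCompact isCompact_Icc Ioo_subset_Icc_self measurableSet_Ioo 2

noncomputable def rationalEvalLp : ℝ[X] →ₗ[ℝ] Lp ℝ 2 μ₀ where
  toFun p := (memLp_rationalEval p).toLp _
  map_add' p q := by simp_rw [map_add]; exact MemLp.toLp_add _ _
  map_smul' c p := by simp_rw [map_smul]; exact MemLp.toLp_const_smul _ _

lemma coeFn_rationalEvalLp (p : ℝ[X]) :
    rationalEvalLp p =ᵐ[μ₀] rationalEval p :=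
  (memLp_rationalEval p).coeFn_toLp

def legendreRationalLp : Set (Lp ℝ 2 μ₀) :=
  {f | ∃ n : ℕ, 1 ≤ n ∧ (f : ℝ → ℝ) =ᵐ[μ₀] legendreRational n}

lemma range_rationalEvalLp_le :
    LinearMap.range rationalEvalLp ≤ Submodule.span ℝ legendreRationalLp := by
  rw [LinearMap.range_eq_map, ← span_range_legendre, LinearMap.map_span, ← range_comp,
    Submodule.span_le]
  rintro _ ⟨n, rfl⟩
  have hR : (-1 : ℝ) ^ n • rationalEvalLp (legendre n) ∈ legendreRationalLp := by
    refine ⟨n + 1, by omega, ?_⟩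
    filter_upwards [Lp.coeFn_smul ((-1 : ℝ) ^ n) (rationalEvalLp (legendre n)),
      coeFn_rationalEvalLp (legendre n), ae_restrict_mem measurableSet_Ioo] with x hsmul heval hx
    rw [hsmul, Pi.smul_apply, heval, smul_eq_mul, legendreRational_succ_eq (by linarith [hx.1])]
  have hsq : ((-1 : ℝ) ^ n) * (-1) ^ n = 1 := by rw [← mul_pow]; simp
  simpa [smul_smul, hsq] using Submodule.smul_mem _ ((-1 : ℝ) ^ n) (Submodule.subset_span hR)

lemma dense_range_rationalEvalLp :
    Dense (LinearMap.range rationalEvalLp : Set (Lp ℝ 2 μ₀)) := by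
  refine Dense.of_closure <| (BoundedContinuousFunction.toLp_denseRange (p := 2) ℝ _ ℝ
    ENNReal.ofNat_ne_top).mono (range_subset_iff.2 fun g => Metric.mem_closure_iff.2 fun ε hε => ?_)
  obtain ⟨q, hq⟩ := exists_rationalEval_near g g.continuous.continuousOn (half_pos hε)
  refine ⟨rationalEvalLp q, ⟨q, rfl⟩, ?_⟩
  refine (Lp.dist_le_of_ae_bound (half_pos hε).le ?_).trans_lt (half_lt_self hε)
  filter_upwards [BoundedContinuousFunction.coeFn_toLp 2 _ ℝ g, coeFn_rationalEvalLp q,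
    ae_restrict_mem measurableSet_Ioo] with x hg hq' hx
  rw [hg, hq', Real.norm_eq_abs, abs_sub_comm]
  exact (hq x (Ioo_subset_Icc_self hx)).le

end LegendreRational

/-- The Legendre rational functions `{R_n : n ≥ 1}` are total in `L²(0,1)`. -/
theorem legendreRational_total :
    Dense (↑(Submodule.span ℝ
      {f : Lp ℝ 2 (volume.restrict (Set.Ioo (0:ℝ) 1)) |
        ∃ n : ℕ, 1 ≤ n ∧
          (f : ℝ → ℝ) =ᵐ[volume.restrict (Set.Ioo (0:ℝ) 1)] legendreRational n}) :
      Set (Lp ℝ 2 (volume.restrict (Set.Ioo (0:ℝ) 1)))) :=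
  LegendreRational.dense_range_rationalEvalLp.mono LegendreRational.range_rationalEvalLp_le
end

section
/- For all integers m, n ≥ 1, the Legendre exponential functions satisfy the weighted orthogonality relation ∫₀¹ 2^x E_m(x) E_n(x) dx = δ_{mn}/(2 ln 2 · (2n−1)). -/
/-!
Substituting `u = 2^(1-x) - 1`, for which `(u + 1)/2 = 2^(-x)` and
`du = -2 log 2 · 2^(-x) dx`, turns `2^x E_m E_n dx` into
`(-1)^(m+n) P̃_{m-1}(u) P̃_{n-1}(u) du / (2 log 2)`, so the claim is the orthogonality of the
shifted Legendre polynomials on `[0,1]`, i.e. of the `P_n` on `[-1,1]`.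
For the latter, Rodrigues' formula and `n`-fold integration by parts (the derivatives of
`(x² - 1)^n` of order `< n` vanish at `±1`) give `∫ P_n g = 0` for `deg g < n`, and
`∫ P_n² = 2/(2n+1)` follows from `∫ (1 - x²)^n = 2^(2n+1) n!² / (2n+1)!`.
-/

open Polynomial MeasureTheory Real Filter

/-- The Legendre exponential function `E_n(x) = (-1)^{n-1} A_n(2^{1-x} - 1)`. -/
noncomputable def legendreExp (n : ℕ) (x : ℝ) : ℝ :=
  (-1) ^ (n - 1) * alteredLegendre n ((2 : ℝ) ^ (1 - x) - 1)

lemma integral_derivative_eval_mul_eval (p q : ℝ[X]) (a b : ℝ) :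
    ∫ x in a..b, (derivative p).eval x * q.eval x =
      p.eval b * q.eval b - p.eval a * q.eval a -
        ∫ x in a..b, p.eval x * (derivative q).eval x := by
  have h := intervalIntegral.integral_mul_deriv_eq_deriv_mul (a := a) (b := b)
    (fun x _ => q.hasDerivAt x) (fun x _ => p.hasDerivAt x)
    ((derivative q).continuous.intervalIntegrable a b)
    ((derivative p).continuous.intervalIntegrable a b)
  simpa only [mul_comm (q.eval _), mul_comm (eval _ (derivative q))] using h

lemma integral_iterate_derivative_eval_mul_eval {f : ℝ[X]} {a b : ℝ} {n : ℕ}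
    (ha : ∀ k < n, (derivative^[k] f).eval a = 0) (hb : ∀ k < n, (derivative^[k] f).eval b = 0)
    (g : ℝ[X]) :
    ∫ x in a..b, (derivative^[n] f).eval x * g.eval x =
      (-1) ^ n * ∫ x in a..b, f.eval x * (derivative^[n] g).eval x := by
  induction n generalizing g with
  | zero => simp
  | succ n ih =>
    rw [Function.iterate_succ_apply', integral_derivative_eval_mul_eval, ha n n.lt_succ_self,
      hb n n.lt_succ_self, ih (fun k hk => ha k (by omega)) (fun k hk => hb k (by omega)),
      ← Function.iterate_succ_apply]
    ring

lemma eval_iterate_derivative_pow_of_isRoot {R : Type*} [CommRing R] {p : R[X]} {x : R}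
    (hx : p.IsRoot x) {n k : ℕ} (hk : k < n) : (derivative^[k] (p ^ n)).eval x = 0 := by
  obtain ⟨r, hr⟩ := pow_sub_dvd_iterate_derivative_pow p n k
  rw [hr, eval_mul, eval_pow, hx.eq_zero, zero_pow (by omega), zero_mul]

lemma iterate_derivative_natDegree {R : Type*} [CommSemiring R] (p : R[X]) :
    derivative^[p.natDegree] p = C (p.natDegree.factorial * p.leadingCoeff) := by
  rw [eq_C_of_natDegree_le_zero ((natDegree_iterate_derivative _ _).trans (by simp)),
    coeff_iterate_derivative, zero_add, Nat.descFactorial_self, nsmul_eq_mul, leadingCoeff]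

section SqSubOne

variable {R : Type*} [CommRing R]

lemma monic_sq_sub_one_pow (n : ℕ) : ((X ^ 2 - 1 : R[X]) ^ n).Monic := by
  simpa using (monic_X_pow_sub_C (1 : R) two_ne_zero).pow n

lemma natDegree_sq_sub_one_pow [Nontrivial R] (n : ℕ) :
    ((X ^ 2 - 1 : R[X]) ^ n).natDegree = 2 * n := by
  rw [← C_1, (monic_X_pow_sub_C (1 : R) two_ne_zero).natDegree_pow, natDegree_X_pow_sub_C,
    mul_comm]

lemma iterate_derivative_two_mul_sq_sub_one_pow [Nontrivial R] (n : ℕ) :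
    derivative^[2 * n] ((X ^ 2 - 1 : R[X]) ^ n) = C ((2 * n).factorial : R) := by
  have h := iterate_derivative_natDegree ((X ^ 2 - 1 : R[X]) ^ n)
  rwa [natDegree_sq_sub_one_pow, (monic_sq_sub_one_pow n).leadingCoeff, mul_one] at h

end SqSubOne

lemma integral_one_sub_sq_pow_succ (n : ℕ) :
    (2 * n + 3 : ℝ) * ∫ x in (-1 : ℝ)..1, (1 - x ^ 2) ^ (n + 1) =
      (2 * n + 2) * ∫ x in (-1 : ℝ)..1, (1 - x ^ 2) ^ n := by
  have hderiv (x : ℝ) : HasDerivAt (fun x => x * (1 - x ^ 2) ^ (n + 1))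
      ((2 * n + 3) * (1 - x ^ 2) ^ (n + 1) - (2 * n + 2) * (1 - x ^ 2) ^ n) x := by
    refine ((hasDerivAt_id' x).fun_mul (((hasDerivAt_pow 2 x).const_sub 1).fun_pow (n + 1))
      ).congr_deriv ?_
    simp only [Nat.add_sub_cancel, pow_succ]
    push_cast
    ring
  have hzero : ∫ x in (-1 : ℝ)..1,
      ((2 * n + 3) * (1 - x ^ 2) ^ (n + 1) - (2 * n + 2) * (1 - x ^ 2) ^ n) = 0 := by
    rw [intervalIntegral.integral_eq_sub_of_hasDerivAt (fun x _ => hderiv x)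
      (Continuous.intervalIntegrable (by fun_prop) _ _)]
    norm_num
  rwa [intervalIntegral.integral_sub (Continuous.intervalIntegrable (by fun_prop) _ _)
    (Continuous.intervalIntegrable (by fun_prop) _ _), intervalIntegral.integral_const_mul,
    intervalIntegral.integral_const_mul, sub_eq_zero] at hzero

lemma integral_one_sub_sq_pow (n : ℕ) :
    ∫ x in (-1 : ℝ)..1, (1 - x ^ 2) ^ n =
      2 ^ (2 * n + 1) * (n.factorial : ℝ) ^ 2 / (2 * n + 1).factorial := by
  induction n with
  | zero => norm_num
  | succ n ih =>
    have h := integral_one_sub_sq_pow_succ n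
    rw [ih] at h
    rw [mul_div_assoc', eq_div_iff (by positivity)] at h
    rw [eq_div_iff (by positivity), show 2 * (n + 1) + 1 = 2 * n + 1 + 1 + 1 by ring,
      Nat.factorial_succ (2 * n + 1 + 1), Nat.factorial_succ (2 * n + 1), Nat.factorial_succ n]
    push_cast
    linear_combination (2 * (n : ℝ) + 2) * h

lemma natDegree_legendre_le (n : ℕ) : (legendre n).natDegree ≤ n := by
  refine (natDegree_smul_le _ _).trans ((natDegree_iterate_derivative _ _).trans ?_)
  rw [natDegree_sq_sub_one_pow]
  omega

lemma integral_legendre_mul (n : ℕ) (g : ℝ[X]) :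
    ∫ x in (-1 : ℝ)..1, (legendre n).eval x * g.eval x =
      (2 ^ n * n.factorial : ℝ)⁻¹ * (-1) ^ n *
        ∫ x in (-1 : ℝ)..1, (x ^ 2 - 1) ^ n * (derivative^[n] g).eval x := by
  have hroot {x : ℝ} (hx : x ^ 2 = 1) : (X ^ 2 - 1 : ℝ[X]).IsRoot x := by simp [hx]
  simp only [legendre, eval_smul, smul_eq_mul, one_div, mul_assoc]
  rw [intervalIntegral.integral_const_mul, integral_iterate_derivative_eval_mul_eval
    (fun k hk => eval_iterate_derivative_pow_of_isRoot (hroot (by norm_num)) hk)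
    (fun k hk => eval_iterate_derivative_pow_of_isRoot (hroot (by norm_num)) hk)]
  simp

lemma integral_legendre_mul_eq_zero {n : ℕ} {g : ℝ[X]} (hg : g.natDegree < n) :
    ∫ x in (-1 : ℝ)..1, (legendre n).eval x * g.eval x = 0 := by
  simp [integral_legendre_mul, iterate_derivative_eq_zero hg]

lemma integral_legendre_mul_self (n : ℕ) :
    ∫ x in (-1 : ℝ)..1, (legendre n).eval x * (legendre n).eval x = 2 / (2 * n + 1) := by
  have htop : derivative^[n] (legendre n) =
      C ((2 ^ n * n.factorial : ℝ)⁻¹ * (2 * n).factorial) := by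
    rw [legendre, iterate_derivative_smul, ← Function.iterate_add_apply, ← two_mul,
      iterate_derivative_two_mul_sq_sub_one_pow, smul_C, smul_eq_mul, one_div]
  have hsign : ∫ x in (-1 : ℝ)..1, (x ^ 2 - 1) ^ n =
      (-1) ^ n * ∫ x in (-1 : ℝ)..1, (1 - x ^ 2) ^ n := by
    rw [← intervalIntegral.integral_const_mul]
    congr 1 with x
    rw [← mul_pow]
    ring_nf
  have hfac : ((2 * n + 1).factorial : ℝ) = (2 * n + 1) * (2 * n).factorial := by
    push_cast [Nat.factorial_succ]
    ring
  rw [integral_legendre_mul, htop]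
  simp only [eval_C]
  rw [intervalIntegral.integral_mul_const, hsign, integral_one_sub_sq_pow, hfac]
  field_simp
  rw [← pow_mul, Even.neg_one_pow ⟨n, by ring⟩, ← pow_mul]
  ring

lemma integral_legendre_mul_legendre (m n : ℕ) :
    ∫ x in (-1 : ℝ)..1, (legendre m).eval x * (legendre n).eval x =
      if m = n then (2 / (2 * n + 1) : ℝ) else 0 := by
  split_ifs with hmn
  · subst hmn
    exact integral_legendre_mul_self m
  rcases lt_or_gt_of_ne hmn with hlt | hgt
  · simp only [mul_comm ((legendre m).eval _)]
    exact integral_legendre_mul_eq_zero ((natDegree_legendre_le m).trans_lt hlt)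
  · exact integral_legendre_mul_eq_zero ((natDegree_legendre_le n).trans_lt hgt)

lemma integral_shiftedLegendre_mul_shiftedLegendre (m n : ℕ) :
    ∫ x in (0 : ℝ)..1, shiftedLegendre m x * shiftedLegendre n x =
      if m = n then (1 / (2 * n + 1) : ℝ) else 0 := by
  have h := intervalIntegral.integral_comp_mul_sub
    (fun t => (legendre m).eval t * (legendre n).eval t) (two_ne_zero' ℝ) 1 (a := 0) (b := 1)
  norm_num at h
  simp only [_root_.shiftedLegendre, h, integral_legendre_mul_legendre]
  split_ifs <;> ring

lemma hasDerivAt_two_rpow_one_sub_sub_one (x : ℝ) :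
    HasDerivAt (fun x : ℝ => (2 : ℝ) ^ (1 - x) - 1) (-(2 * Real.log 2 * 2 ^ (-x))) x := by
  have h := (((hasDerivAt_id' x).const_sub 1).const_rpow two_pos).sub_const 1
  refine h.congr_deriv ?_
  rw [sub_eq_add_neg, Real.rpow_add two_pos, Real.rpow_one]
  ring

lemma integral_two_rpow_neg_mul_comp {g : ℝ → ℝ} (hg : Continuous g) :
    ∫ x in (0 : ℝ)..1, (2 : ℝ) ^ (-x) * g (2 ^ (1 - x) - 1) =
      (2 * Real.log 2)⁻¹ * ∫ u in (0 : ℝ)..1, g u := by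
  have h := intervalIntegral.integral_comp_mul_deriv (a := 0) (b := 1)
    (fun x _ => hasDerivAt_two_rpow_one_sub_sub_one x)
    (Continuous.continuousOn (by fun_prop (disch := norm_num))) hg
  norm_num at h
  rw [intervalIntegral.integral_symm (f := g) 0 1, neg_inj] at h
  have hlog : Real.log 2 ≠ 0 := (Real.log_pos one_lt_two).ne'
  rw [← h, ← intervalIntegral.integral_const_mul]
  congr 1 with x
  field_simp

lemma legendreExp_eq (n : ℕ) (x : ℝ) :
    legendreExp n x = (-1) ^ (n - 1) * 2 ^ (-x) * shiftedLegendre (n - 1) (2 ^ (1 - x) - 1) := by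
  rw [legendreExp, alteredLegendre, sub_add_cancel, sub_eq_add_neg, Real.rpow_add two_pos,
    Real.rpow_one, mul_div_cancel_left₀ _ two_ne_zero, mul_assoc]

/-- Weighted orthogonality of the Legendre exponential functions:
`∫₀¹ 2^x E_m(x) E_n(x) dx = δ_{mn}/(2 ln 2 (2n-1))`. -/
theorem legendreExp_orthogonality (m n : ℕ) (hm : 1 ≤ m) (hn : 1 ≤ n) :
    ∫ x in (0:ℝ)..1, (2 : ℝ) ^ x * legendreExp m x * legendreExp n x =
      (if m = n then 1 else 0) / (2 * Real.log 2 * (2 * (n : ℝ) - 1)) := by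
  have hweight (x : ℝ) : (2 : ℝ) ^ x * legendreExp m x * legendreExp n x =
      (-1) ^ (m - 1 + (n - 1)) * (2 ^ (-x) * (shiftedLegendre (m - 1) (2 ^ (1 - x) - 1) *
        shiftedLegendre (n - 1) (2 ^ (1 - x) - 1))) := by
    rw [legendreExp_eq, legendreExp_eq, Real.rpow_neg zero_le_two, pow_add]
    field_simp
  simp_rw [hweight]
  rw [intervalIntegral.integral_const_mul, integral_two_rpow_neg_mul_comp
    (g := fun u => shiftedLegendre (m - 1) u * shiftedLegendre (n - 1) u)
    (by unfold _root_.shiftedLegendre; fun_prop), integral_shiftedLegendre_mul_shiftedLegendre]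
  obtain rfl | hmn := eq_or_ne m n
  · rw [if_pos rfl, if_pos rfl, ← two_mul, pow_mul, neg_one_sq, one_pow, Nat.cast_sub hn]
    push_cast
    field_simp
    ring
  · simp [hmn, show m - 1 ≠ n - 1 by omega]
end
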